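/- Let B ⊆ ℝ² be a finite nonempty set of base-station locations, u ∈ ℝ² a user location with u ∉ B, h : ℝ² → ℝ_{>0} fading gains, b* ∈ B a serving base station, and l(·, R) the multi-slope pathloss function with all exponents α_j > 0. Define SIR(B, u, b*, R) = h(b*) l(‖b* - u‖, R) / Σ_{b ∈ B \ {b*}} h(b) l(‖b - u‖, R). Then for every k > 0, SIR(kB, ku, kb*, kR) = SIR(B, u, b*, R), where kB = {kb : b ∈ B} and the scaled network uses fading gains h'(kb) = h(b). -/

import Mathlib

open Finset

/-- Normalization constants of the multi-slope pathloss model. -/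
noncomputable def eta (R α : ℕ → ℝ) (j : ℕ) : ℝ :=
  ∏ ℓ ∈ Finset.Icc 2 j, R (ℓ - 1) ^ (α ℓ - α (ℓ - 1))

/-- Multi-slope pathloss function with boundaries `R` (convention `R 0 = 0`, `R n = ∞`,
the last piece having no upper bound) and exponents `α`. -/
noncomputable def pathloss (n : ℕ) (R α : ℕ → ℝ) (z : ℝ) : ℝ :=
  ∑ j ∈ Finset.Icc 1 n,
    if R (j - 1) < z ∧ (z ≤ R j ∨ j = n) then eta R α j * z ^ (-(α j)) else 0

/-!
Scaling every distance and every boundary by `k > 0` multiplies the pathloss by `k ^ (-α 1)`: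
on the `j`-th piece the factor `k ^ (-α j)` coming from `z ^ (-α j)` is compensated by the factor
`k ^ (α j - α 1)` that the scaled boundaries contribute to `eta`, a telescoping product. Hence
the received power of every base station gets the same factor, which cancels in the ratio.
-/

-- Unlike `Real.mul_rpow`, no sign condition on `y`: the negative-base convention
-- `y ^ z = exp (log y * z) * cos (z * π)` is compatible with a positive factor.
theorem Real.mul_rpow_of_pos_left {x : ℝ} (hx : 0 < x) (y z : ℝ) :
    (x * y) ^ z = x ^ z * y ^ z := by
  rcases le_or_gt 0 y with hy | hy
  · exact Real.mul_rpow hx.le hy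
  · rw [Real.rpow_def_of_neg (mul_neg_of_pos_of_neg hx hy), Real.rpow_def_of_neg hy,
      Real.rpow_def_of_pos hx, Real.log_mul hx.ne' hy.ne, add_mul, Real.exp_add]
    ring

theorem eta_const_mul (R α : ℕ → ℝ) {k : ℝ} (hk : 0 < k) {j : ℕ} (hj : 1 ≤ j) :
    eta (fun i => k * R i) α j = k ^ (α j - α 1) * eta R α j := by
  induction j, hj using Nat.le_induction with
  | base => simp [eta]
  | succ m hm ih =>
    have hstep : 2 ≤ m + 1 := by omega
    simp only [eta, prod_Icc_succ_top hstep, Nat.add_sub_cancel] at ih ⊢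
    rw [ih, Real.mul_rpow_of_pos_left hk, ← sub_add_sub_cancel (α (m + 1)) (α m) (α 1),
      Real.rpow_add hk]
    ring

theorem pathloss_const_mul (n : ℕ) (R α : ℕ → ℝ) {k : ℝ} (hk : 0 < k) (z : ℝ) :
    pathloss n (fun j => k * R j) α (k * z) = k ^ (-α 1) * pathloss n R α z := by
  unfold pathloss
  rw [mul_sum]
  refine sum_congr rfl fun j hj => ?_
  simp only [mul_lt_mul_iff_right₀ hk, mul_le_mul_iff_right₀ hk]
  split_ifs
  · rw [eta_const_mul R α hk (mem_Icc.1 hj).1, Real.mul_rpow_of_pos_left hk,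
      show -α 1 = (α j - α 1) + -α j by ring, Real.rpow_add hk]
    ring
  · simp

theorem stmt4_general [DecidableEq (EuclideanSpace ℝ (Fin 2))] (n : ℕ) (R α : ℕ → ℝ)
    (B : Finset (EuclideanSpace ℝ (Fin 2)))
    (u : EuclideanSpace ℝ (Fin 2))
    (h : EuclideanSpace ℝ (Fin 2) → ℝ)
    (bstar : EuclideanSpace ℝ (Fin 2))
    (k : ℝ) (hk : 0 < k) :
    (h (k⁻¹ • (k • bstar)) * pathloss n (fun j => k * R j) α ‖k • bstar - k • u‖) /
        ∑ b' ∈ (B.image (fun b => k • b)).erase (k • bstar),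
          h (k⁻¹ • b') * pathloss n (fun j => k * R j) α ‖b' - k • u‖ =
      (h bstar * pathloss n R α ‖bstar - u‖) /
        ∑ b ∈ B.erase bstar, h b * pathloss n R α ‖b - u‖ := by
  have hinj : Function.Injective (fun b : EuclideanSpace ℝ (Fin 2) => k • b) :=
    smul_right_injective _ hk.ne'
  have hterm : ∀ b : EuclideanSpace ℝ (Fin 2),
      h (k⁻¹ • (k • b)) * pathloss n (fun j => k * R j) α ‖k • b - k • u‖
        = k ^ (-α 1) * (h b * pathloss n R α ‖b - u‖) := by
    intro b
    rw [inv_smul_smul₀ hk.ne', ← smul_sub, norm_smul, Real.norm_of_nonneg hk.le,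
      pathloss_const_mul n R α hk]
    ring
  rw [← image_erase hinj, sum_image hinj.injOn]
  simp only [hterm, ← mul_sum]
  exact mul_div_mul_left _ _ (Real.rpow_pos_of_pos hk _).ne'

theorem stmt4 [DecidableEq (EuclideanSpace ℝ (Fin 2))] (n : ℕ) (hn : 1 ≤ n) (R α : ℕ → ℝ)
    (hR0 : R 0 = 0) (hRmono : ∀ j, 1 ≤ j → j ≤ n - 1 → R (j - 1) < R j)
    (hα : ∀ j, 1 ≤ j → j ≤ n → 0 < α j)
    (B : Finset (EuclideanSpace ℝ (Fin 2))) (hB : B.Nonempty)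
    (u : EuclideanSpace ℝ (Fin 2)) (hu : u ∉ B)
    (h : EuclideanSpace ℝ (Fin 2) → ℝ) (hh : ∀ b, 0 < h b)
    (bstar : EuclideanSpace ℝ (Fin 2)) (hbstar : bstar ∈ B)
    (k : ℝ) (hk : 0 < k) :
    (h (k⁻¹ • (k • bstar)) * pathloss n (fun j => k * R j) α ‖k • bstar - k • u‖) /
        ∑ b' ∈ (B.image (fun b => k • b)).erase (k • bstar),
          h (k⁻¹ • b') * pathloss n (fun j => k * R j) α ‖b' - k • u‖ =
      (h bstar * pathloss n R α ‖bstar - u‖) /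
        ∑ b ∈ B.erase bstar, h b * pathloss n R α ‖b - u‖ :=
  stmt4_general n R α B u h bstar k hk
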